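/- arXiv:2507.13286 — 5 statements merged into one kernel-verified Lean document; each statement's English description precedes it below -/
import Mathlib

section
/- Let v and e be random vectors on a probability space with values in ℝ^m whose outer products vvᵀ, eeᵀ, veᵀ are entrywise integrable, let M be a real symmetric positive semidefinite m×m matrix, and let η > 0, δ > 0 and s > 0 be real numbers. If E[vvᵀ] ⪯ M, E[eeᵀ] ⪯ δ·M, and E[eeᵀ] ⪯ (δ/s²)·M in the Loewner order, then s²·E[eeᵀ] + s·E[veᵀ + evᵀ] ⪯ (s²δ + sη + δ/(sη))·M. -/
/-!
The cross term is handled by a matrix Young inequality: since `E[(ηv - e)(ηv - e)ᵀ] ⪰ 0`,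
`s·E[veᵀ + evᵀ] ⪯ sη·E[vvᵀ] + (s/η)·E[eeᵀ]`. The target is then the sum of the three hypotheses
weighted by `s²`, `sη`, `s/η` and of this Young bound weighted by `s/η`: the surplus `E[vvᵀ]` and
`(s/η)·E[eeᵀ]` terms cancel, and the weights on `M` add up to `s²δ + sη + δ/(sη)`.
-/

open MeasureTheory Matrix

namespace ProbabilityTheory

variable {Ω n : Type*} [MeasurableSpace Ω] (μ : Measure Ω)

noncomputable def crossMoment (v w : Ω → n → ℝ) : Matrix n n ℝ :=
  Matrix.of fun i j => ∫ ω, v ω i * w ω j ∂μ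

lemma crossMoment_transpose (v w : Ω → n → ℝ) :
    (crossMoment μ v w)ᵀ = crossMoment μ w v := by
  ext i j
  simp only [crossMoment, transpose_apply, of_apply, mul_comm]

lemma crossMoment_smul_left (c : ℝ) (v w : Ω → n → ℝ) :
    crossMoment μ (c • v) w = c • crossMoment μ v w := by
  ext i j
  simp only [crossMoment, of_apply, Matrix.smul_apply, Pi.smul_apply, smul_eq_mul, mul_assoc,
    integral_const_mul]

lemma crossMoment_smul_right (c : ℝ) (v w : Ω → n → ℝ) :
    crossMoment μ v (c • w) = c • crossMoment μ v w := by
  rw [← crossMoment_transpose, crossMoment_smul_left, transpose_smul, crossMoment_transpose]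

variable {μ}

lemma integrable_sub_mul_sub {v w : Ω → n → ℝ}
    (hvv : ∀ i j, Integrable (fun ω => v ω i * v ω j) μ)
    (hww : ∀ i j, Integrable (fun ω => w ω i * w ω j) μ)
    (hvw : ∀ i j, Integrable (fun ω => v ω i * w ω j) μ) (i j : n) :
    Integrable (fun ω => (v - w) ω i * (v - w) ω j) μ := by
  have hwv : Integrable (fun ω => w ω i * v ω j) μ := by
    simpa only [mul_comm] using hvw j i
  refine ((((hvv i j).sub (hvw i j)).sub hwv).add (hww i j)).congr (ae_of_all _ fun ω => ?_)
  simp only [Pi.sub_apply, Pi.add_apply]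
  ring

lemma crossMoment_sub_sub {v w : Ω → n → ℝ}
    (hvv : ∀ i j, Integrable (fun ω => v ω i * v ω j) μ)
    (hww : ∀ i j, Integrable (fun ω => w ω i * w ω j) μ)
    (hvw : ∀ i j, Integrable (fun ω => v ω i * w ω j) μ) :
    crossMoment μ (v - w) (v - w) =
      crossMoment μ v v + crossMoment μ w w - (crossMoment μ v w + (crossMoment μ v w)ᵀ) := by
  ext i j
  have hwv : Integrable (fun ω => w ω i * v ω j) μ := by
    simpa only [mul_comm] using hvw j i
  have hexpand : (fun ω => (v - w) ω i * (v - w) ω j) =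
      fun ω => v ω i * v ω j + w ω i * w ω j - (v ω i * w ω j + w ω i * v ω j) := by
    ext ω
    simp only [Pi.sub_apply]
    ring
  rw [crossMoment_transpose]
  simp only [crossMoment, of_apply, Matrix.add_apply, Matrix.sub_apply]
  rw [hexpand, integral_sub, integral_add (hvv i j) (hww i j), integral_add (hvw i j) hwv]
  exacts [(hvv i j).add (hww i j), (hvw i j).add hwv]

variable [Fintype n]

lemma dotProduct_crossMoment_mulVec {v w : Ω → n → ℝ}
    (hvw : ∀ i j, Integrable (fun ω => v ω i * w ω j) μ) (x y : n → ℝ) :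
    x ⬝ᵥ crossMoment μ v w *ᵥ y = ∫ ω, (x ⬝ᵥ v ω) * (w ω ⬝ᵥ y) ∂μ := by
  have hterm : ∀ i j, Integrable (fun ω => x i * y j * (v ω i * w ω j)) μ :=
    fun i j => (hvw i j).const_mul _
  calc x ⬝ᵥ crossMoment μ v w *ᵥ y
      = ∑ i, ∑ j, ∫ ω, x i * y j * (v ω i * w ω j) ∂μ := by
        simp only [dotProduct, mulVec, crossMoment, of_apply, Finset.mul_sum, integral_const_mul]
        exact Finset.sum_congr rfl fun i _ => Finset.sum_congr rfl fun j _ => by ring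
    _ = ∫ ω, ∑ i, ∑ j, x i * y j * (v ω i * w ω j) ∂μ := by
        rw [integral_finsetSum _ fun i _ => integrable_finsetSum _ fun j _ => hterm i j]
        exact Finset.sum_congr rfl fun i _ => (integral_finsetSum _ fun j _ => hterm i j).symm
    _ = ∫ ω, (x ⬝ᵥ v ω) * (w ω ⬝ᵥ y) ∂μ := by
        congr 1 with ω
        rw [dotProduct, dotProduct, Finset.sum_mul_sum]
        exact Finset.sum_congr rfl fun i _ => Finset.sum_congr rfl fun j _ => by ring

lemma crossMoment_posSemidef {w : Ω → n → ℝ}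
    (hw : ∀ i j, Integrable (fun ω => w ω i * w ω j) μ) :
    (crossMoment μ w w).PosSemidef := by
  refine PosSemidef.of_dotProduct_mulVec_nonneg (crossMoment_transpose μ w w) fun x => ?_
  rw [star_trivial, dotProduct_crossMoment_mulVec hw]
  simp only [dotProduct_comm (w _) x]
  exact integral_nonneg fun ω => mul_self_nonneg _

/-- Matrix Young inequality: the left-hand side is the second moment of `a • v - w`. -/
lemma posSemidef_crossMoment_young {v w : Ω → n → ℝ}
    (hvv : ∀ i j, Integrable (fun ω => v ω i * v ω j) μ)
    (hww : ∀ i j, Integrable (fun ω => w ω i * w ω j) μ)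
    (hvw : ∀ i j, Integrable (fun ω => v ω i * w ω j) μ) (a : ℝ) :
    (a ^ 2 • crossMoment μ v v + crossMoment μ w w -
      a • (crossMoment μ v w + (crossMoment μ v w)ᵀ)).PosSemidef := by
  have havav : ∀ i j, Integrable (fun ω => (a • v) ω i * (a • v) ω j) μ := fun i j => by
    simpa only [Pi.smul_apply, smul_eq_mul, mul_mul_mul_comm] using (hvv i j).const_mul (a * a)
  have havw : ∀ i j, Integrable (fun ω => (a • v) ω i * w ω j) μ := fun i j => by
    simpa only [Pi.smul_apply, smul_eq_mul, mul_assoc] using (hvw i j).const_mul a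
  have hpsd := crossMoment_posSemidef (integrable_sub_mul_sub havav hww havw)
  rwa [crossMoment_sub_sub havav hww havw, crossMoment_smul_left, crossMoment_smul_right,
    crossMoment_smul_left, smul_smul, ← sq, transpose_smul, ← smul_add] at hpsd

end ProbabilityTheory

open ProbabilityTheory

theorem decoding_error_covariance_bound_general
    {Ω : Type*} [MeasurableSpace Ω] (μ : Measure Ω)
    {m : ℕ} (v e : Ω → Fin m → ℝ)
    (hvv : ∀ i j, Integrable (fun ω => v ω i * v ω j) μ)
    (hee : ∀ i j, Integrable (fun ω => e ω i * e ω j) μ)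
    (hve : ∀ i j, Integrable (fun ω => v ω i * e ω j) μ)
    (M : Matrix (Fin m) (Fin m) ℝ)
    (η δ s : ℝ) (hη : 0 < η) (hs : 0 < s)
    (hv : (M - Matrix.of fun i j => ∫ ω, v ω i * v ω j ∂μ).PosSemidef)
    (he1 : (δ • M - Matrix.of fun i j => ∫ ω, e ω i * e ω j ∂μ).PosSemidef)
    (he2 : ((δ / s ^ 2) • M - Matrix.of fun i j => ∫ ω, e ω i * e ω j ∂μ).PosSemidef) :
    ((s ^ 2 * δ + s * η + δ / (s * η)) • M -
      (s ^ 2 • (Matrix.of fun i j => ∫ ω, e ω i * e ω j ∂μ) +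
        s • ((Matrix.of fun i j => ∫ ω, v ω i * e ω j ∂μ) +
          (Matrix.of fun i j => ∫ ω, v ω i * e ω j ∂μ)ᵀ))).PosSemidef := by
  set Vvv := crossMoment μ v v
  set Vee := crossMoment μ e e
  set Vve := crossMoment μ v e
  have hyoung := posSemidef_crossMoment_young hvv hee hve η
  have hsplit : (s ^ 2 * δ + s * η + δ / (s * η)) • M - (s ^ 2 • Vee + s • (Vve + Vveᵀ)) =
      s ^ 2 • (δ • M - Vee) + (s * η) • (M - Vvv) + (s / η) • ((δ / s ^ 2) • M - Vee) +
        (s / η) • (η ^ 2 • Vvv + Vee - η • (Vve + Vveᵀ)) := by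
    match_scalars <;> field_simp <;> ring
  change (_ - (s ^ 2 • Vee + s • (Vve + Vveᵀ))).PosSemidef
  rw [hsplit]
  exact (((he1.smul (by positivity)).add (hv.smul (by positivity))).add
    (he2.smul (by positivity))).add (hyoung.smul (by positivity))

/-- Per-sensor bound on the combined decoding-error covariance and cross-covariance term:
if `E[vvᵀ] ⪯ M`, `E[eeᵀ] ⪯ δ·M` and `E[eeᵀ] ⪯ (δ/s²)·M`, then
`s²·E[eeᵀ] + s·E[veᵀ + evᵀ] ⪯ (s²δ + sη + δ/(sη))·M`. -/
theorem decoding_error_covariance_bound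
    {Ω : Type*} [MeasurableSpace Ω] (μ : Measure Ω) [IsProbabilityMeasure μ]
    {m : ℕ} (v e : Ω → Fin m → ℝ)
    (hvv : ∀ i j, Integrable (fun ω => v ω i * v ω j) μ)
    (hee : ∀ i j, Integrable (fun ω => e ω i * e ω j) μ)
    (hve : ∀ i j, Integrable (fun ω => v ω i * e ω j) μ)
    (M : Matrix (Fin m) (Fin m) ℝ) (hM : M.PosSemidef)
    (η δ s : ℝ) (hη : 0 < η) (hδ : 0 < δ) (hs : 0 < s)
    (hv : (M - Matrix.of fun i j => ∫ ω, v ω i * v ω j ∂μ).PosSemidef)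
    (he1 : (δ • M - Matrix.of fun i j => ∫ ω, e ω i * e ω j ∂μ).PosSemidef)
    (he2 : ((δ / s ^ 2) • M - Matrix.of fun i j => ∫ ω, e ω i * e ω j ∂μ).PosSemidef) :
    ((s ^ 2 * δ + s * η + δ / (s * η)) • M -
      (s ^ 2 • (Matrix.of fun i j => ∫ ω, e ω i * e ω j ∂μ) +
        s • ((Matrix.of fun i j => ∫ ω, v ω i * e ω j ∂μ) +
          (Matrix.of fun i j => ∫ ω, v ω i * e ω j ∂μ)ᵀ))).PosSemidef :=
  decoding_error_covariance_bound_general μ v e hvv hee hve M η δ s hη hs hv he1 he2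
end

section
/- Let M be a real symmetric positive definite p×p matrix, V a real symmetric p×p matrix with V M V ⪯ M, N a real symmetric p×p matrix with N ⪯ V M V, and K an arbitrary real n×p matrix. Set w² = λ_min(M − V M V)/λ_max(M). Then K(M − N)Kᵀ ⪰ w²·K M Kᵀ in the Loewner order; equivalently, −K M Kᵀ + K N Kᵀ ⪯ −w²·K M Kᵀ. -/
/-!
With `c = λ_min(M - VMV) / λ_max(M)` one has
`c • M ⪯ c λ_max(M) • 1 = λ_min(M - VMV) • 1 ⪯ M - VMV ⪯ M - N`,
and the congruence `X ↦ K X Kᵀ` preserves the Loewner order.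
-/

open Matrix
open scoped MatrixOrder ComplexOrder

namespace Matrix

variable {m n 𝕜 : Type*} [Fintype n] [RCLike 𝕜]

lemma mul_mul_conjTranspose_mono [Fintype m] {A B : Matrix n n 𝕜} (h : A ≤ B) (K : Matrix m n 𝕜) :
    K * A * Kᴴ ≤ K * B * Kᴴ := by
  rw [le_iff] at h ⊢
  simpa only [Matrix.mul_sub, Matrix.sub_mul] using h.mul_mul_conjTranspose_same K

variable [DecidableEq n]

lemma IsHermitian.iInf_eigenvalues_smul_one_le [Nonempty n] {A : Matrix n n 𝕜}
    (hA : A.IsHermitian) : (⨅ i, hA.eigenvalues i) • (1 : Matrix n n 𝕜) ≤ A := by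
  rw [← Algebra.algebraMap_eq_smul_one]
  refine algebraMap_le_of_le_spectrum (fun x hx => ?_) hA.isSelfAdjoint
  obtain ⟨i, rfl⟩ := hA.spectrum_real_eq_range_eigenvalues ▸ hx
  exact ciInf_le (Set.finite_range _).bddBelow i

lemma IsHermitian.le_iSup_eigenvalues_smul_one [Nonempty n] {A : Matrix n n 𝕜}
    (hA : A.IsHermitian) : A ≤ (⨆ i, hA.eigenvalues i) • (1 : Matrix n n 𝕜) := by
  rw [← Algebra.algebraMap_eq_smul_one]
  refine le_algebraMap_of_spectrum_le (fun x hx => ?_) hA.isSelfAdjoint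
  obtain ⟨i, rfl⟩ := hA.spectrum_real_eq_range_eigenvalues ▸ hx
  exact le_ciSup (Set.finite_range _).bddAbove i

lemma PosDef.iSup_eigenvalues_pos [Nonempty n] {A : Matrix n n 𝕜} (hA : A.PosDef) :
    0 < ⨆ i, hA.1.eigenvalues i :=
  (hA.eigenvalues_pos (Classical.arbitrary n)).trans_le
    (le_ciSup (Set.finite_range _).bddAbove _)

lemma PosDef.iInf_eigenvalues_div_iSup_eigenvalues_smul_le {M D : Matrix n n 𝕜}
    (hM : M.PosDef) (hD : D.PosSemidef) :
    ((⨅ i, hD.1.eigenvalues i) / (⨆ i, hM.1.eigenvalues i)) • M ≤ D := by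
  cases isEmpty_or_nonempty n
  · exact (Subsingleton.elim _ _).le
  have hmax := hM.iSup_eigenvalues_pos
  have hmin : 0 ≤ ⨅ i, hD.1.eigenvalues i := Real.iInf_nonneg hD.eigenvalues_nonneg
  calc ((⨅ i, hD.1.eigenvalues i) / (⨆ i, hM.1.eigenvalues i)) • M
      ≤ ((⨅ i, hD.1.eigenvalues i) / (⨆ i, hM.1.eigenvalues i)) •
          (⨆ i, hM.1.eigenvalues i) • (1 : Matrix n n 𝕜) :=
        smul_le_smul_of_nonneg_left hM.1.le_iSup_eigenvalues_smul_one (by positivity)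
    _ = (⨅ i, hD.1.eigenvalues i) • (1 : Matrix n n 𝕜) := by
        rw [smul_smul, div_mul_cancel₀ _ hmax.ne']
    _ ≤ D := hD.1.iInf_eigenvalues_smul_one_le

end Matrix

theorem filtering_error_covariance_bound_general
    {p n : ℕ} (M V N : Matrix (Fin p) (Fin p) ℝ)
    (hM : M.PosDef)
    (hVMV : (M - V * M * V).PosSemidef)
    (hNle : (V * M * V - N).PosSemidef)
    (K : Matrix (Fin n) (Fin p) ℝ) :
    (K * (M - N) * Kᵀ -
      ((⨅ i, hVMV.1.eigenvalues i) / (⨆ i, hM.1.eigenvalues i)) • (K * M * Kᵀ)).PosSemidef := by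
  have hscaled_le : ((⨅ i, hVMV.1.eigenvalues i) / (⨆ i, hM.1.eigenvalues i)) • M ≤ M - N :=
    (hM.iInf_eigenvalues_div_iSup_eigenvalues_smul_le hVMV).trans
      (sub_le_sub_left (le_iff.mpr hNle) M)
  have hcongr := mul_mul_conjTranspose_mono hscaled_le K
  rwa [Matrix.mul_smul, Matrix.smul_mul, conjTranspose_eq_transpose_of_trivial] at hcongr

/-- If `V M V ⪯ M`, `N ⪯ V M V`, and `w² = λ_min(M - VMV)/λ_max(M)`, then for any `K`,
`K (M - N) Kᵀ ⪰ w² · K M Kᵀ` in the Loewner order. -/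
theorem filtering_error_covariance_bound
    {p n : ℕ} (M V N : Matrix (Fin p) (Fin p) ℝ)
    (hM : M.PosDef) (hV : V.IsHermitian) (hN : N.IsHermitian)
    (hVMV : (M - V * M * V).PosSemidef)
    (hNle : (V * M * V - N).PosSemidef)
    (K : Matrix (Fin n) (Fin p) ℝ) :
    (K * (M - N) * Kᵀ -
      ((⨅ i, hVMV.1.eigenvalues i) / (⨆ i, hM.1.eigenvalues i)) • (K * M * Kᵀ)).PosSemidef :=
  filtering_error_covariance_bound_general M V N hM hVMV hNle K
end

section
/- Let q > 0, let P be a real symmetric n×n matrix with P ⪰ q·I_n, let R be a real symmetric positive definite p×p matrix, and let C be a real p×n matrix. Define S = C P Cᵀ + R (which is positive definite) and K = P Cᵀ S⁻¹. Then KᵀK ⪰ κ·I_p in the Loewner order with κ = q²·λ_min(C Cᵀ)/(λ_max(S))². In particular, if C has full row rank then κ > 0. -/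
open Matrix
open scoped MatrixOrder

/-! With `S = C P Cᵀ + R` one has `KᵀK = S⁻¹ (C P² Cᵀ) S⁻¹` and `κ • 1 = S⁻¹ (κ S²) S⁻¹`,
so it suffices to compare the middle factors, which is the chain
`κ S² ≤ κ λ_max(S)² = q² λ_min(CCᵀ) ≤ q² CCᵀ ≤ C P² Cᵀ`.
The two squaring steps compare the square of a positive matrix with the square of a scalar
bound; this holds pointwise on the spectrum, hence by the continuous functional calculus. -/

lemma sInf_spectrum_nonneg_of_nonneg {A : Type*} [Ring A] [PartialOrder A] [Algebra ℝ A]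
    [NonnegSpectrumClass ℝ A] {a : A} (ha : 0 ≤ a) : 0 ≤ sInf (spectrum ℝ a) :=
  Real.sInf_nonneg fun _ hx ↦ spectrum_nonneg_of_nonneg ha hx

section SpectralBounds

variable {A : Type*} [TopologicalSpace A] [Ring A] [StarRing A] [PartialOrder A]
  [StarOrderedRing A] [Algebra ℝ A] [ContinuousFunctionalCalculus ℝ A IsSelfAdjoint]
  [NonnegSpectrumClass ℝ A]

lemma IsSelfAdjoint.algebraMap_sInf_spectrum_le {a : A} (ha : IsSelfAdjoint a) :
    algebraMap ℝ A (sInf (spectrum ℝ a)) ≤ a :=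
  (algebraMap_le_iff_le_spectrum ha).2 fun _ hx ↦
    csInf_le (ContinuousFunctionalCalculus.isCompact_spectrum a).bddBelow hx

lemma IsSelfAdjoint.le_algebraMap_sSup_spectrum {a : A} (ha : IsSelfAdjoint a) :
    a ≤ algebraMap ℝ A (sSup (spectrum ℝ a)) :=
  (le_algebraMap_iff_spectrum_le ha).2 fun _ hx ↦
    le_csSup (ContinuousFunctionalCalculus.isCompact_spectrum a).bddAbove hx

lemma algebraMap_sq_le_sq [StarModule ℝ A] {a : A} {r : ℝ} (hr : 0 ≤ r)
    (h : algebraMap ℝ A r ≤ a) : algebraMap ℝ A (r ^ 2) ≤ a ^ 2 := by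
  have ha : IsSelfAdjoint a := .of_ge h (.algebraMap A (.all r))
  rw [← cfc_pow_id (R := ℝ) a 2]
  exact (algebraMap_le_cfc_iff _ _ a).2 fun x hx ↦
    pow_le_pow_left₀ hr ((algebraMap_le_iff_le_spectrum ha).1 h x hx) 2

lemma sq_le_algebraMap_sq {a : A} {r : ℝ} (ha : 0 ≤ a) (h : a ≤ algebraMap ℝ A r) :
    a ^ 2 ≤ algebraMap ℝ A (r ^ 2) := by
  rw [← cfc_pow_id (R := ℝ) a 2 (.of_nonneg ha)]
  exact (cfc_le_algebraMap_iff _ _ a (ha := .of_nonneg ha)).2 fun x hx ↦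
    pow_le_pow_left₀ (spectrum_nonneg_of_nonneg ha hx)
      ((le_algebraMap_iff_spectrum_le (.of_nonneg ha)).1 h x hx) 2

variable [Nontrivial A]

lemma IsStrictlyPositive.sInf_spectrum_pos {a : A} (ha : IsStrictlyPositive a) :
    0 < sInf (spectrum ℝ a) :=
  ha.spectrum_pos <| (ContinuousFunctionalCalculus.isCompact_spectrum a).sInf_mem
    (ContinuousFunctionalCalculus.spectrum_nonempty a ha.isSelfAdjoint)

lemma IsStrictlyPositive.sSup_spectrum_pos {a : A} (ha : IsStrictlyPositive a) :
    0 < sSup (spectrum ℝ a) :=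
  ha.spectrum_pos <| (ContinuousFunctionalCalculus.isCompact_spectrum a).sSup_mem
    (ContinuousFunctionalCalculus.spectrum_nonempty a ha.isSelfAdjoint)

end SpectralBounds

namespace Matrix

open scoped ComplexOrder

variable {𝕜 m n : Type*} [RCLike 𝕜] [Fintype m] [Fintype n]

lemma mul_mul_conjTranspose_le_mul_mul_conjTranspose {A B : Matrix n n 𝕜} (h : A ≤ B)
    (C : Matrix m n 𝕜) : C * A * Cᴴ ≤ C * B * Cᴴ := by
  rw [le_iff, ← Matrix.sub_mul, ← Matrix.mul_sub]
  exact h.mul_mul_conjTranspose_same C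

variable [DecidableEq m]

lemma posDef_self_mul_conjTranspose_of_rank_eq_card {C : Matrix m n 𝕜}
    (h : C.rank = Fintype.card m) : (C * Cᴴ).PosDef := by
  refine (posSemidef_self_mul_conjTranspose C).posDef_iff_isUnit.2 ?_
  refine linearIndependent_rows_iff_isUnit.1 (linearIndependent_iff_card_eq_finrank_span.2 ?_)
  rw [Set.finrank, ← rank_eq_finrank_span_row, rank_self_mul_conjTranspose, h]

lemma smul_one_le_inv_mul_mul_inv {S M : Matrix m m 𝕜} (hS : S.PosDef) {c : ℝ}
    (h : c • S ^ 2 ≤ M) : c • 1 ≤ S⁻¹ * M * S⁻¹ := by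
  have hS_unit : IsUnit S.det := (isUnit_iff_isUnit_det S).1 hS.isUnit
  have hc : c • (1 : Matrix m m 𝕜) = S⁻¹ * (c • S ^ 2) * S⁻¹ := by
    rw [Matrix.mul_smul, Matrix.smul_mul, sq, ← Matrix.mul_assoc, nonsing_inv_mul _ hS_unit,
      Matrix.one_mul, mul_nonsing_inv _ hS_unit]
  rw [hc]
  exact hS.isHermitian.inv.isSelfAdjoint.conjugate_le_conjugate h

lemma smul_one_le_mul_sq_mul_conjTranspose [DecidableEq n] {P : Matrix n n 𝕜} {q : ℝ}
    (hq : 0 ≤ q) (hP : q • 1 ≤ P) (C : Matrix m n 𝕜) :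
    (q ^ 2 * sInf (spectrum ℝ (C * Cᴴ))) • 1 ≤ C * P ^ 2 * Cᴴ := calc
  (q ^ 2 * sInf (spectrum ℝ (C * Cᴴ))) • 1
      = q ^ 2 • algebraMap ℝ (Matrix m m 𝕜) (sInf (spectrum ℝ (C * Cᴴ))) := by
    rw [Algebra.algebraMap_eq_smul_one, smul_smul]
  _ ≤ q ^ 2 • (C * Cᴴ) := smul_le_smul_of_nonneg_left
    (isHermitian_mul_conjTranspose_self C).isSelfAdjoint.algebraMap_sInf_spectrum_le (by positivity)
  _ = C * algebraMap ℝ (Matrix n n 𝕜) (q ^ 2) * Cᴴ := by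
    rw [Algebra.algebraMap_eq_smul_one, Matrix.mul_smul, Matrix.mul_one, Matrix.smul_mul]
  _ ≤ C * P ^ 2 * Cᴴ := mul_mul_conjTranspose_le_mul_mul_conjTranspose
    (algebraMap_sq_le_sq hq (by rwa [Algebra.algebraMap_eq_smul_one])) C

end Matrix

/-- Kalman-gain lower bound: if `P ⪰ q·I` with `q > 0`, `R` is positive definite,
`S = C P Cᵀ + R` and `K = P Cᵀ S⁻¹`, then `S` is positive definite and
`KᵀK ⪰ κ·I` with `κ = q²·λ_min(CCᵀ)/λ_max(S)²`; if `C` has full row rank then `κ > 0`. -/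
theorem kalman_gain_lower_bound
    {n p : ℕ} (hp : 0 < p) (q : ℝ) (hq : 0 < q)
    (P : Matrix (Fin n) (Fin n) ℝ) (hP : (P - q • 1).PosSemidef)
    (R : Matrix (Fin p) (Fin p) ℝ) (hR : R.PosDef)
    (C : Matrix (Fin p) (Fin n) ℝ) :
    (C * P * Cᵀ + R).PosDef ∧
    ((P * Cᵀ * (C * P * Cᵀ + R)⁻¹)ᵀ * (P * Cᵀ * (C * P * Cᵀ + R)⁻¹) -
      (q ^ 2 * sInf (spectrum ℝ (C * Cᵀ)) /
        (sSup (spectrum ℝ (C * P * Cᵀ + R))) ^ 2) • 1).PosSemidef ∧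
    (C.rank = p →
      0 < q ^ 2 * sInf (spectrum ℝ (C * Cᵀ)) /
        (sSup (spectrum ℝ (C * P * Cᵀ + R))) ^ 2) := by
  have : Nonempty (Fin p) := Fin.pos_iff_nonempty.mp hp
  rw [← conjTranspose_eq_transpose_of_trivial C]
  set S := C * P * Cᴴ + R
  set μ := sInf (spectrum ℝ (C * Cᴴ))
  set σ := sSup (spectrum ℝ S)
  have hP0 : P.PosSemidef := by simpa using hP.add (PosSemidef.one.smul hq.le)
  have hS : S.PosDef := PosDef.posSemidef_add (hP0.mul_mul_conjTranspose_same C) hR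
  have hσ : 0 < σ := (isStrictlyPositive_iff_posDef.2 hS).sSup_spectrum_pos
  have hμ : 0 ≤ μ := sInf_spectrum_nonneg_of_nonneg (posSemidef_self_mul_conjTranspose C).nonneg
  refine ⟨hS, ?_, fun hC ↦ ?_⟩
  · have hgain : (P * Cᴴ * S⁻¹)ᵀ * (P * Cᴴ * S⁻¹) = S⁻¹ * (C * P ^ 2 * Cᴴ) * S⁻¹ := by
      rw [← conjTranspose_eq_transpose_of_trivial]
      simp only [conjTranspose_mul, conjTranspose_conjTranspose, hS.isHermitian.inv.eq,
        hP0.isHermitian.eq, sq, Matrix.mul_assoc]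
    rw [← le_iff, hgain]
    refine smul_one_le_inv_mul_mul_inv hS ?_
    calc (q ^ 2 * μ / σ ^ 2) • S ^ 2
        ≤ (q ^ 2 * μ / σ ^ 2) • algebraMap ℝ (Matrix (Fin p) (Fin p) ℝ) (σ ^ 2) :=
          smul_le_smul_of_nonneg_left (sq_le_algebraMap_sq hS.posSemidef.nonneg
            hS.isHermitian.isSelfAdjoint.le_algebraMap_sSup_spectrum) (by positivity)
      _ = (q ^ 2 * μ) • 1 := by
          rw [Algebra.algebraMap_eq_smul_one, smul_smul, div_mul_cancel₀ _ (by positivity)]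
      _ ≤ C * P ^ 2 * Cᴴ := smul_one_le_mul_sq_mul_conjTranspose hq.le hP C
  · have hCC : (C * Cᴴ).PosDef :=
      posDef_self_mul_conjTranspose_of_rank_eq_card (hC.trans (Fintype.card_fin p).symm)
    have hμ_pos : 0 < μ := (isStrictlyPositive_iff_posDef.2 hCC).sInf_spectrum_pos
    positivity
end

section
/- Fix k̄ ∈ ℕ, real numbers a and s, and sequences y, ȳ, ȳᵉ, z, e : ℕ → ℝ^m satisfying, for all k ≥ k̄ + 2, the decoding recursions ȳ_k = s·z_k + a·ȳ_{k−1} and ȳᵉ_k = s·z_k + a·ȳᵉ_{k−1}, and, for all k ≥ k̄ + 1, the relation ȳ_k = y_k + s·e_k. Define the eavesdropper's decoding error ē_k = ȳᵉ_k − y_k. Then for every k ≥ k̄ + 1, ē_k = a^{k−k̄−1}·(ē_{k̄+1} − s·e_{k̄+1}) + s·e_k. -/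
/-- Explicit form of the eavesdropper's decoding error after the critical event: if the
decoding recursions `ȳ_k = s z_k + a ȳ_{k-1}` and `ȳᵉ_k = s z_k + a ȳᵉ_{k-1}` hold for
`k ≥ k̄ + 2` and `ȳ_k = y_k + s e_k` holds for `k ≥ k̄ + 1`, then the eavesdropper's
decoding error `ē_k = ȳᵉ_k - y_k` satisfies
`ē_k = a^{k - k̄ - 1} (ē_{k̄+1} - s e_{k̄+1}) + s e_k` for all `k ≥ k̄ + 1`. -/
theorem eavesdropper_decoding_error_formula
    {m : ℕ} (kbar : ℕ) (a s : ℝ)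
    (y ybar ybare z e : ℕ → Fin m → ℝ)
    (hdec : ∀ k, kbar + 2 ≤ k → ybar k = s • z k + a • ybar (k - 1))
    (hdece : ∀ k, kbar + 2 ≤ k → ybare k = s • z k + a • ybare (k - 1))
    (henc : ∀ k, kbar + 1 ≤ k → ybar k = y k + s • e k) :
    ∀ k, kbar + 1 ≤ k →
      ybare k - y k =
        a ^ (k - kbar - 1) • (ybare (kbar + 1) - y (kbar + 1) - s • e (kbar + 1)) +
          s • e k := by
  have key : ∀ n : ℕ, ybare (kbar+1+n) - ybar (kbar+1+n)
      = a ^ n • (ybare (kbar+1) - ybar (kbar+1)) := by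
    intro n
    induction n with
    | zero => simp
    | succ n ih =>
      have h2 : kbar + 2 ≤ kbar + 1 + (n+1) := by omega
      have hpred : kbar + 1 + (n+1) - 1 = kbar + 1 + n := by omega
      rw [hdece _ h2, hdec _ h2, hpred]
      have : s • z (kbar+1+(n+1)) + a • ybare (kbar+1+n)
          - (s • z (kbar+1+(n+1)) + a • ybar (kbar+1+n))
          = a • (ybare (kbar+1+n) - ybar (kbar+1+n)) := by module
      rw [this, ih, smul_smul, pow_succ, mul_comm]
  intro k hk
  obtain ⟨n, rfl⟩ : ∃ n, k = kbar + 1 + n := ⟨k - (kbar+1), by omega⟩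
  have h1 := henc (kbar+1) (by omega)
  have h2 := henc (kbar+1+n) (by omega)
  have hk2 := key n
  have hidx : kbar + 1 + n - kbar - 1 = n := by omega
  rw [hidx]
  rw [h1, h2] at hk2
  have : ybare (kbar+1+n) - y (kbar+1+n)
      = (ybare (kbar+1+n) - (y (kbar+1+n) + s • e (kbar+1+n))) + s • e (kbar+1+n) := by
    module
  rw [this, hk2]
  congr 1
  congr 1
  module
end

section
/- Let A ∈ ℝ^{n×n}, let κ > 0 and c ≥ 0 be real constants, and let (m_k) in ℝⁿ, (e_k) in ℝᵖ, (K_k) in ℝ^{n×p} and (C_k) in ℝ^{p×n} be sequences such that K_kᵀK_k ⪰ κ·I_p for all k, ‖C_k‖ ≤ c for all k, and m_{k+1} = A·m_k + K_{k+1}·(C_{k+1}·A·m_k + e_{k+1}) for all k. If ‖e_k‖ → ∞ as k → ∞, then the sequence (m_k) is unbounded: sup_k ‖m_k‖ = ∞. -/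
open Filter

/-- If the filter gains satisfy the uniform lower bound `KᵀK ⪰ κ·I` (`κ > 0`), the
measurement maps are uniformly bounded, the mean error satisfies the filter-update
recursion driven by `e_k`, and `‖e_k‖ → ∞`, then the mean error sequence is unbounded. -/
theorem mean_estimation_error_diverges
    {n p : ℕ}
    (A : EuclideanSpace ℝ (Fin n) →L[ℝ] EuclideanSpace ℝ (Fin n))
    (κ c : ℝ) (hκ : 0 < κ) (hc : 0 ≤ c)
    (m : ℕ → EuclideanSpace ℝ (Fin n))
    (e : ℕ → EuclideanSpace ℝ (Fin p))
    (K : ℕ → EuclideanSpace ℝ (Fin p) →L[ℝ] EuclideanSpace ℝ (Fin n))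
    (C : ℕ → EuclideanSpace ℝ (Fin n) →L[ℝ] EuclideanSpace ℝ (Fin p))
    (hK : ∀ k x, κ * ‖x‖ ^ 2 ≤ ‖K k x‖ ^ 2)
    (hC : ∀ k, ‖C k‖ ≤ c)
    (hrec : ∀ k, m (k + 1) = A (m k) + K (k + 1) (C (k + 1) (A (m k)) + e (k + 1)))
    (he : Tendsto (fun k => ‖e k‖) atTop atTop) :
    ¬ BddAbove (Set.range fun k => ‖m k‖) := by
  intro hbdd
  obtain ⟨M, hM⟩ := hbdd
  have hM' : ∀ k, ‖m k‖ ≤ M := fun k => hM ⟨k, rfl⟩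
  have hM0 : 0 ≤ M := le_trans (norm_nonneg _) (hM' 0)
  set S := Real.sqrt κ with hS
  have hS0 : 0 < S := Real.sqrt_pos.mpr hκ
  have hS2 : S ^ 2 = κ := Real.sq_sqrt hκ.le
  set B := M + ‖A‖ * M with hB
  have hB0 : 0 ≤ B := by positivity
  set T := B / S + c * ‖A‖ * M + 1 with hT
  obtain ⟨N, hN⟩ := (tendsto_atTop.mp he T).exists_forall_of_atTop
  -- consider k = N + 1
  set j := N
  have hNj : T ≤ ‖e (j + 1)‖ := hN (j + 1) (Nat.le_succ _)
  set v := C (j + 1) (A (m j)) + e (j + 1) with hv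
  have hKv : K (j + 1) v = m (j + 1) - A (m j) := by
    have := hrec j
    rw [this]; abel
  have hKvB : ‖K (j + 1) v‖ ≤ B := by
    rw [hKv]
    calc ‖m (j + 1) - A (m j)‖ ≤ ‖m (j + 1)‖ + ‖A (m j)‖ := norm_sub_le _ _
    _ ≤ M + ‖A‖ * M := by
        gcongr
        · exact hM' _
        · exact le_trans (A.le_opNorm _) (by gcongr; exact hM' _)
  have h1 : κ * ‖v‖ ^ 2 ≤ B ^ 2 := by
    refine le_trans (hK (j+1) v) ?_
    exact pow_le_pow_left₀ (norm_nonneg _) hKvB 2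
  have h2 : (S * ‖v‖) ^ 2 ≤ B ^ 2 := by
    rw [mul_pow, hS2]; exact h1
  have h3 : S * ‖v‖ ≤ B := by
    nlinarith [norm_nonneg v, mul_nonneg hS0.le (norm_nonneg v)]
  have h4 : ‖v‖ ≤ B / S := (le_div_iff₀' hS0).mpr h3
  have h5 : ‖e (j + 1)‖ ≤ ‖v‖ + c * ‖A‖ * M := by
    have : e (j + 1) = v - C (j + 1) (A (m j)) := by rw [hv]; abel
    rw [this]
    refine le_trans (norm_sub_le _ _) ?_
    gcongr
    calc ‖C (j + 1) (A (m j))‖ ≤ ‖C (j + 1)‖ * ‖A (m j)‖ := (C (j+1)).le_opNorm _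
    _ ≤ c * (‖A‖ * M) :=
        mul_le_mul (hC _) (le_trans (A.le_opNorm _)
          (mul_le_mul_of_nonneg_left (hM' _) (norm_nonneg _)))
          (norm_nonneg _) hc
    _ = c * ‖A‖ * M := by ring
  have : T ≤ B / S + c * ‖A‖ * M := le_trans hNj (le_trans h5 (by gcongr))
  simp only [hT] at this
  linarith
end
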